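/- Let A be a symmetric positive-definite 3×3 real matrix with μ_A > 0 (hyperbolic flow), S := A⁻¹J(A−I), λ := √(μ_A/det A) > 0, and M̃ the associated symbol. Then there exists k₀ ∈ ℝ³ \ {0} with Sᵀk₀ = λ k₀, and for any such k₀ and any a₀ ≠ 0 the amplitude of the corresponding plane-wave solution grows exponentially: for every t ∈ ℝ, |a₀ M̃(t;k₀)| · |e^{−tSᵀ}k₀| = |a₀| |k₀| e^{λt}. In particular the plane-wave solution φ(x,t) = a₀ M̃(t;k₀) e^{−tSᵀ}k₀ e^{2πi (e^{−tSᵀ}k₀)·x} is unbounded in the supremum norm as t → ∞, so the quadratic steady solution P̄(x) = ½ x·Ax is unstable to plane-wave perturbations. -/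

import Mathlib

open Matrix MeasureTheory Real Filter

/-!
The characteristic determinant of `S` factors as `det (S - λ) = λ (μ_A - λ² det A) / det A`, so
`λ = √(μ_A / det A)` is a real eigenvalue of `Sᵀ`. Along an eigenvector `k₀` the flow
`e^{-tSᵀ} k₀ = e^{-λt} k₀` stays on a ray, and `m` is homogeneous of degree `0`, so `m̃(t;k₀) = m(k₀)`
is constant. Dotting `Sᵀ k₀ = λ k₀` with `A⁻¹ k₀` and using the symmetry of `A` and the skewness of
`J` gives `m(k₀) = 2λ`. Hence `M̃(t;k₀) = e^{2λt}`, and the amplitude is `|a₀| |k₀| e^{2λt} e^{-λt}`.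
-/

/-- The Coriolis-type matrix `J`. -/
noncomputable def Jmat : Matrix (Fin 3) (Fin 3) ℝ := !![0, -1, 0; 1, 0, 0; 0, 0, 0]

/-- The matrix `S := A⁻¹ J (A − I)`. -/
noncomputable def Smat (A : Matrix (Fin 3) (Fin 3) ℝ) : Matrix (Fin 3) (Fin 3) ℝ :=
  A⁻¹ * Jmat * (A - 1)

/-- The symbol `m(x) = 2 (x · A⁻¹Jx)/(x · A⁻¹x)`. -/
noncomputable def symb (A : Matrix (Fin 3) (Fin 3) ℝ) (x : Fin 3 → ℝ) : ℝ :=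
  2 * (x ⬝ᵥ (A⁻¹ * Jmat) *ᵥ x) / (x ⬝ᵥ A⁻¹ *ᵥ x)

/-- The symbol `M̃(t;ξ) := exp(∫₀ᵗ m(e^{−rSᵀ}ξ) dr)`. -/
noncomputable def symbM (A : Matrix (Fin 3) (Fin 3) ℝ) (t : ℝ) (ξ : Fin 3 → ℝ) : ℝ :=
  Real.exp (∫ r in (0:ℝ)..t, symb A (NormedSpace.exp ((-r) • (Smat A)ᵀ) *ᵥ ξ))

/-- The Euclidean norm on `ℝ³`. -/
noncomputable def eunorm (v : Fin 3 → ℝ) : ℝ := Real.sqrt (∑ i : Fin 3, v i ^ 2)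

theorem Matrix.exp_mulVec_of_mulVec_eq_smul {n : Type*} [Fintype n] [DecidableEq n]
    {M : Matrix n n ℝ} {v : n → ℝ} {l : ℝ} (h : M *ᵥ v = l • v) :
    NormedSpace.exp M *ᵥ v = Real.exp l • v := by
  let _ := Matrix.linftyOpNormedRing (n := n) (α := ℝ)
  let _ := Matrix.linftyOpNormedAlgebra (n := n) (R := ℝ) (α := ℝ)
  have hpow (k : ℕ) : M ^ k *ᵥ v = l ^ k • v := by
    induction k with
    | zero => simp
    | succ k ih => rw [pow_succ', ← mulVec_mulVec, ih, mulVec_smul, h, smul_smul, pow_succ]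
  have hM := (NormedSpace.exp_series_hasSum_exp' (𝕂 := ℝ) M).map (mulVec.addMonoidHomLeft v)
    (continuous_id.matrix_mulVec continuous_const)
  have hl := (NormedSpace.exp_series_hasSum_exp' (𝕂 := ℝ) l).smul_const v
  rw [← Real.exp_eq_exp_ℝ] at hl
  refine hM.unique ?_
  convert hl using 2 with k
  simp [mulVec.addMonoidHomLeft, smul_mulVec, hpow, smul_smul]

theorem Matrix.exists_transpose_mulVec_eq_smul_of_det_eq_zero {n K : Type*} [Fintype n]
    [DecidableEq n] [Field K] {M : Matrix n n K} {l : K} (h : (M - l • 1).det = 0) :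
    ∃ v ≠ 0, Mᵀ *ᵥ v = l • v := by
  have hT : (Mᵀ - l • 1).det = 0 := by
    rwa [← transpose_one, ← transpose_smul, ← transpose_sub, det_transpose]
  obtain ⟨v, hv, hMv⟩ := exists_mulVec_eq_zero_iff.2 hT
  refine ⟨v, hv, ?_⟩
  rwa [sub_mulVec, smul_mulVec, one_mulVec, sub_eq_zero] at hMv

theorem Matrix.dotProduct_mulVec_of_transpose_eq_neg {n : Type*} [Fintype n] {J : Matrix n n ℝ}
    (hJ : Jᵀ = -J) (x y : n → ℝ) : x ⬝ᵥ J *ᵥ y = -(y ⬝ᵥ J *ᵥ x) := by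
  rw [dotProduct_mulVec, ← mulVec_transpose, hJ, neg_mulVec, neg_dotProduct, dotProduct_comm]

theorem Matrix.dotProduct_inv_mul_mulVec_eq_of_eigenvector {n : Type*} [Fintype n] [DecidableEq n]
    {A J : Matrix n n ℝ} (hA : A.IsSymm) (hAdet : IsUnit A.det) (hJ : Jᵀ = -J)
    {k : n → ℝ} {l : ℝ} (hk : (A⁻¹ * J * (A - 1))ᵀ *ᵥ k = l • k) :
    k ⬝ᵥ (A⁻¹ * J) *ᵥ k = l * (k ⬝ᵥ A⁻¹ *ᵥ k) := by
  have skew := dotProduct_mulVec_of_transpose_eq_neg hJ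
  have hAinv : (A⁻¹)ᵀ = A⁻¹ := by rw [transpose_nonsing_inv, hA.eq]
  set u := A⁻¹ *ᵥ k
  have huJu : u ⬝ᵥ J *ᵥ u = 0 := by linarith [skew u u]
  have hAu : (A - 1) *ᵥ u = k - u := by
    rw [sub_mulVec, one_mulVec, mulVec_mulVec, mul_nonsing_inv A hAdet, one_mulVec]
  have hSk : (A⁻¹ * J * (A - 1))ᵀ *ᵥ k = -((A - 1) *ᵥ J *ᵥ u) := by
    rw [transpose_mul, transpose_mul, hJ, hAinv, transpose_sub, transpose_one, hA.eq,
      ← mulVec_mulVec, ← mulVec_mulVec, neg_mulVec, mulVec_neg]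
  have hkJu : -(k ⬝ᵥ J *ᵥ u) = l * (u ⬝ᵥ k) := by
    have := congrArg (u ⬝ᵥ ·) hk
    simp only [hSk, dotProduct_neg, dotProduct_smul, smul_eq_mul] at this
    rw [dotProduct_mulVec, ← mulVec_transpose, transpose_sub, transpose_one, hA.eq, hAu,
      sub_dotProduct, huJu, sub_zero] at this
    exact this
  calc k ⬝ᵥ (A⁻¹ * J) *ᵥ k = u ⬝ᵥ J *ᵥ k := by
        rw [← mulVec_mulVec, dotProduct_mulVec, ← mulVec_transpose, hAinv]
    _ = l * (k ⬝ᵥ A⁻¹ *ᵥ k) := by rw [skew, hkJu, dotProduct_comm]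

theorem Jmat_transpose : Jmatᵀ = -Jmat := by
  ext i j
  fin_cases i <;> fin_cases j <;> simp [Jmat]

theorem symb_smul (A : Matrix (Fin 3) (Fin 3) ℝ) {s : ℝ} (hs : s ≠ 0) (x : Fin 3 → ℝ) :
    symb A (s • x) = symb A x := by
  simp only [symb, mulVec_smul, smul_dotProduct, dotProduct_smul, smul_eq_mul]
  field_simp

theorem symbM_eq_exp_of_transpose_mulVec_eq_smul (A : Matrix (Fin 3) (Fin 3) ℝ)
    {k : Fin 3 → ℝ} {l : ℝ} (hk : (Smat A)ᵀ *ᵥ k = l • k) (t : ℝ) :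
    symbM A t k = Real.exp (t * symb A k) := by
  have hflow (r : ℝ) : symb A (NormedSpace.exp ((-r) • (Smat A)ᵀ) *ᵥ k) = symb A k := by
    rw [exp_mulVec_of_mulVec_eq_smul (l := -r * l) (by rw [smul_mulVec, hk, smul_smul]),
      symb_smul A (Real.exp_pos _).ne']
  simp only [symbM, hflow, intervalIntegral.integral_const, sub_zero, smul_eq_mul]

theorem det_Jmat_mul_sub_smul (a b c d e f l : ℝ) :
    (Jmat * (!![a, b, c; b, d, e; c, e, f] - 1) - l • !![a, b, c; b, d, e; c, e, f]).det =
      l * (a * f - c ^ 2 + d * f - e ^ 2 - f - (!![a, b, c; b, d, e; c, e, f]).det) -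
        l ^ 3 * (!![a, b, c; b, d, e; c, e, f]).det := by
  simp only [Jmat, one_fin_three, of_sub_of, sub_cons, head_cons, tail_cons, sub_zero, sub_self,
    zero_empty, cons_mul, Nat.succ_eq_add_one, Nat.reduceAdd, vecMul_cons, zero_smul, neg_smul,
    one_smul, neg_cons, neg_sub, neg_empty, empty_vecMul, add_zero, zero_add, empty_mul,
    Equiv.symm_apply_apply, smul_of, smul_cons, smul_eq_mul, smul_empty, zero_sub, det_fin_three,
    Fin.isValue, of_apply, cons_val', cons_val_zero, cons_val_fin_one, cons_val_one, cons_val,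
    mul_neg, sub_neg_eq_add]
  ring

theorem det_Smat_sub_smul {A : Matrix (Fin 3) (Fin 3) ℝ} (hAdet : IsUnit A.det)
    {a b c d e f : ℝ} (hA : A = !![a, b, c; b, d, e; c, e, f]) (l : ℝ) :
    (Smat A - l • 1).det =
      A.det⁻¹ * (l * (a * f - c ^ 2 + d * f - e ^ 2 - f - A.det) - l ^ 3 * A.det) := by
  have : Smat A - l • 1 = A⁻¹ * (Jmat * (A - 1) - l • A) := by
    rw [Matrix.mul_sub, Matrix.mul_smul, nonsing_inv_mul A hAdet, Smat, Matrix.mul_assoc]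
  rw [this, det_mul, det_nonsing_inv, Ring.inverse_eq_inv', hA, det_Jmat_mul_sub_smul]

theorem eunorm_eq_norm (v : Fin 3 → ℝ) : eunorm v = ‖WithLp.toLp 2 v‖ := by
  simp [eunorm, EuclideanSpace.norm_eq]

theorem eunorm_smul (s : ℝ) (v : Fin 3 → ℝ) : eunorm (s • v) = |s| * eunorm v := by
  rw [eunorm_eq_norm, eunorm_eq_norm, WithLp.toLp_smul, norm_smul, Real.norm_eq_abs]

theorem eunorm_pos {v : Fin 3 → ℝ} (hv : v ≠ 0) : 0 < eunorm v := by
  rw [eunorm_eq_norm, norm_pos_iff]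
  simpa using hv

/-- in the hyperbolic case `μ_A > 0`, with `λ := √(μ_A/det A) > 0`, `Sᵀ` has a
real eigenvector `k₀ ≠ 0` with eigenvalue `λ`, and for any such `k₀` and any `a₀ ≠ 0` the
plane-wave amplitude grows exponentially:
`|a₀ M̃(t;k₀)|·|e^{−tSᵀ}k₀| = |a₀||k₀|e^{λt}`; in particular the plane-wave solution is
unbounded in supremum norm as `t → ∞`, so `P̄(x) = ½x·Ax` is unstable. -/
theorem hyperbolic_instability (a b c d e f : ℝ) (A : Matrix (Fin 3) (Fin 3) ℝ)
    (hA : A = !![a, b, c; b, d, e; c, e, f]) (hApd : A.PosDef)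
    (μ : ℝ) (hμ : μ = a * f - c ^ 2 + d * f - e ^ 2 - f - A.det) (hμpos : 0 < μ)
    (lam : ℝ) (hlam : lam = Real.sqrt (μ / A.det)) :
    0 < lam ∧
    (∃ k₀ : Fin 3 → ℝ, k₀ ≠ 0 ∧ (Smat A)ᵀ *ᵥ k₀ = lam • k₀) ∧
    ∀ k₀ : Fin 3 → ℝ, k₀ ≠ 0 → (Smat A)ᵀ *ᵥ k₀ = lam • k₀ →
      ∀ a₀ : ℝ, a₀ ≠ 0 →
        (∀ t : ℝ,
          |a₀ * symbM A t k₀| * eunorm (NormedSpace.exp ((-t) • (Smat A)ᵀ) *ᵥ k₀) =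
            |a₀| * eunorm k₀ * Real.exp (lam * t)) ∧
        Tendsto
          (fun t : ℝ =>
            |a₀ * symbM A t k₀| * eunorm (NormedSpace.exp ((-t) • (Smat A)ᵀ) *ᵥ k₀))
          atTop atTop := by
  have hdet : 0 < A.det := hApd.det_pos
  have hlam_pos : 0 < lam := hlam ▸ Real.sqrt_pos.2 (div_pos hμpos hdet)
  have hlam_sq : lam ^ 2 * A.det = μ := by
    rw [hlam, Real.sq_sqrt (div_pos hμpos hdet).le, div_mul_cancel₀ _ hdet.ne']
  have hAsymm : A.IsSymm := by
    rw [hA]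
    ext i j
    fin_cases i <;> fin_cases j <;> rfl
  have hchar : (Smat A - lam • 1).det = 0 := by
    rw [det_Smat_sub_smul hdet.ne'.isUnit hA, ← hμ, ← hlam_sq]
    ring
  refine ⟨hlam_pos, exists_transpose_mulVec_eq_smul_of_det_eq_zero hchar,
    fun k₀ hk₀ hk a₀ ha₀ => ?_⟩
  have hsymb : symb A k₀ = 2 * lam := by
    have hpos : 0 < k₀ ⬝ᵥ A⁻¹ *ᵥ k₀ := by simpa using hApd.inv.dotProduct_mulVec_pos hk₀
    rw [symb, dotProduct_inv_mul_mulVec_eq_of_eigenvector hAsymm hdet.ne'.isUnit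
      Jmat_transpose hk]
    field_simp
  have hamp (t : ℝ) : |a₀ * symbM A t k₀| * eunorm (NormedSpace.exp ((-t) • (Smat A)ᵀ) *ᵥ k₀) =
      |a₀| * eunorm k₀ * Real.exp (lam * t) := by
    rw [symbM_eq_exp_of_transpose_mulVec_eq_smul A hk, hsymb,
      exp_mulVec_of_mulVec_eq_smul (l := -t * lam) (by rw [smul_mulVec, hk, smul_smul]),
      eunorm_smul, abs_mul, Real.abs_exp, Real.abs_exp]
    have hexp : Real.exp (t * (2 * lam)) * Real.exp (-t * lam) = Real.exp (lam * t) := by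
      rw [← Real.exp_add]
      ring_nf
    linear_combination (|a₀| * eunorm k₀) * hexp
  refine ⟨hamp, ?_⟩
  simp only [hamp]
  exact (Real.tendsto_exp_atTop.comp (tendsto_id.const_mul_atTop hlam_pos)).const_mul_atTop
    (mul_pos (abs_pos.2 ha₀) (eunorm_pos hk₀))
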